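/- For each fixed d ≥ 1 and N ≥ 2, the generating function of Euclidean billiard partitions with exactly d parts and largest part ≥ N arising from a fixed irreducible partition equals s(d,N)/(q²;q²)_d; i.e., the map (π₁, π₂) ↦ π₁ + π₂ from pairs (irreducible partition with d parts, weakly decreasing sequence of d nonnegative even integers) to Euclidean billiard partitions with d parts is a sum-preserving bijection, hence the generating function of all Euclidean billiard partitions with d parts is (Σ_N s(d,N))/(q²;q²)_d. -/

import Mathlib

/-- A Euclidean billiard partition: a strictly decreasing list of positive
integers, whose smallest (last) part is even, and in which no two adjacent
parts are both odd. -/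
def EBP (L : List ℕ) : Prop :=
  L ≠ [] ∧ (∀ m ∈ L, 0 < m) ∧ L.Chain' (· > ·) ∧
    Even (L.getLastD 1) ∧ L.Chain' fun a b => ¬(Odd a ∧ Odd b)

/-- An irreducible Euclidean billiard partition: additionally the smallest
part equals 2 and adjacent parts differ by at most 2. -/
def IrrEBP (L : List ℕ) : Prop :=
  EBP L ∧ L.getLastD 1 = 2 ∧ L.Chain' fun a b => a ≤ b + 2

/-- The `x = 1` generating function `s(d, N)` of irreducible Euclidean
billiard partitions with `d` parts and largest part `N`, as a power series
in `q` over `ℤ`. -/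
noncomputable def sPSd (d N : ℕ) : PowerSeries ℤ :=
  ∑ᶠ L ∈ {L : List ℕ | IrrEBP L ∧ L.length = d ∧ L.headD 0 = N},
    PowerSeries.monomial L.sum (1 : ℤ)

/-- `(q²; q²)_d = ∏_{j=1}^{d} (1 - q^{2j})`. -/
noncomputable def poch (d : ℕ) : PowerSeries ℤ :=
  ∏ j ∈ Finset.range d, (1 - PowerSeries.X ^ (2 * (j + 1)))

/-!
A Euclidean billiard partition `L₁ > ⋯ > L_d` splits uniquely as `I + m` with `I` irreducible
and `m` a weakly decreasing list of even numbers. Indeed `I_d = 2`, and each step `I_k - I_{k+1}`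
must be the element of `{1, 2}` congruent to `L_k - L_{k+1}` modulo 2, since `m` is even; this
determines `I`, and `L - I` is then even and weakly decreasing because `L_k - L_{k+1}` is at least
that step. Counting by weight, the generating function of billiard partitions with `d` parts is
therefore that of irreducible ones (summed over the largest part `N`) times that of weakly
decreasing even `d`-lists, which is `1/(q²;q²)_d`: such a list either ends in `0`, which may be
dropped, or has every entry at least `2`, and then `2` may be subtracted from every entry.
-/

open List PowerSeries

section CountingSeries

variable {α β : Type*}

noncomputable def countingSeries (s : Set α) (w : α → ℕ) : PowerSeries ℤ :=
  PowerSeries.mk fun n => ({a ∈ s | w a = n}.ncard : ℤ)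

@[simp] lemma coeff_countingSeries (s : Set α) (w : α → ℕ) (n : ℕ) :
    coeff n (countingSeries s w) = ({a ∈ s | w a = n}.ncard : ℤ) :=
  coeff_mk _ _

lemma countingSeries_image {f : α → β} {s : Set α} (hf : s.InjOn f) {w : β → ℕ} {v : α → ℕ}
    (hw : ∀ a ∈ s, w (f a) = v a) : countingSeries (f '' s) w = countingSeries s v := by
  ext n
  have : {b ∈ f '' s | w b = n} = f '' {a ∈ s | v a = n} := by
    ext b
    simp only [Set.mem_sep_iff, Set.mem_image]
    constructor
    · rintro ⟨⟨a, ha, rfl⟩, hn⟩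
      exact ⟨a, ⟨ha, hw a ha ▸ hn⟩, rfl⟩
    · rintro ⟨a, ⟨ha, hn⟩, rfl⟩
      exact ⟨⟨a, ha, rfl⟩, hw a ha ▸ hn⟩
  rw [coeff_countingSeries, coeff_countingSeries, this,
    (hf.mono (Set.sep_subset _ _)).ncard_image]

lemma countingSeries_union {s t : Set α} (hst : Disjoint s t) {w : α → ℕ}
    (hs : ∀ n, {a ∈ s | w a = n}.Finite) (ht : ∀ n, {a ∈ t | w a = n}.Finite) :
    countingSeries (s ∪ t) w = countingSeries s w + countingSeries t w := by
  ext n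
  have hsep : {a ∈ s ∪ t | w a = n} = {a ∈ s | w a = n} ∪ {a ∈ t | w a = n} := Set.sep_union
  rw [map_add, coeff_countingSeries, coeff_countingSeries, coeff_countingSeries, hsep,
    Set.ncard_union_eq (hst.mono (Set.sep_subset _ _) (Set.sep_subset _ _)) (hs n) (ht n),
    Nat.cast_add]

lemma countingSeries_add_const (s : Set α) (w : α → ℕ) (k : ℕ) :
    countingSeries s (fun a => w a + k) = X ^ k * countingSeries s w := by
  ext n
  rw [coeff_X_pow_mul', coeff_countingSeries]
  split_ifs with hk
  · rw [coeff_countingSeries]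
    congr 2
    ext a
    exact and_congr_right fun _ => by omega
  · rw [Set.sep_eq_empty_iff_mem_false.2 fun a _ => by omega, Set.ncard_empty, Nat.cast_zero]

open Finset in
lemma countingSeries_prod {s : Set α} {t : Set β} {w : α → ℕ} {v : β → ℕ}
    (hs : ∀ n, {a ∈ s | w a = n}.Finite) (ht : ∀ n, {b ∈ t | v b = n}.Finite) :
    countingSeries (s ×ˢ t) (fun p => w p.1 + v p.2) =
      countingSeries s w * countingSeries t v := by
  ext n
  have hunion : {p ∈ s ×ˢ t | w p.1 + v p.2 = n} =
      ⋃ ij ∈ (antidiagonal n : Set (ℕ × ℕ)),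
        {a ∈ s | w a = ij.1} ×ˢ {b ∈ t | v b = ij.2} := by
    ext ⟨a, b⟩
    simp only [Set.mem_sep_iff, Set.mem_prod, Set.mem_iUnion, Finset.mem_coe,
      HasAntidiagonal.mem_antidiagonal, exists_prop, Prod.exists]
    constructor
    · rintro ⟨⟨ha, hb⟩, hn⟩
      exact ⟨_, _, hn, ⟨ha, rfl⟩, hb, rfl⟩
    · rintro ⟨i, j, hn, ⟨ha, rfl⟩, hb, rfl⟩
      exact ⟨⟨ha, hb⟩, hn⟩
  have hdisj : (antidiagonal n : Set (ℕ × ℕ)).PairwiseDisjoint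
      fun ij => {a ∈ s | w a = ij.1} ×ˢ {b ∈ t | v b = ij.2} := by
    rintro ⟨i, j⟩ - ⟨i', j'⟩ - hne
    refine Set.disjoint_left.2 fun p hp hp' => hne ?_
    simp only [Set.mem_prod, Set.mem_sep_iff] at hp hp'
    rw [← hp.1.2, ← hp.2.2, ← hp'.1.2, ← hp'.2.2]
  rw [coeff_countingSeries, coeff_mul, hunion, Set.Finite.ncard_biUnion (Finset.finite_toSet _)
    (fun ij _ => (hs _).prod (ht _)) hdisj, finsum_mem_coe_finset]
  push_cast
  simp only [Set.ncard_prod, Nat.cast_mul, coeff_countingSeries]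

lemma finsum_mem_monomial_eq_countingSeries {s : Set α} (hs : s.Finite) (w : α → ℕ) :
    ∑ᶠ a ∈ s, monomial (w a) (1 : ℤ) = countingSeries s w := by
  classical
  ext n
  lift s to Finset α using hs
  rw [finsum_mem_coe_finset, map_sum, coeff_countingSeries]
  simp only [coeff_monomial, Finset.sum_boole, Nat.cast_inj]
  rw [← Set.ncard_coe_finset]
  congr 1
  ext a
  simp [eq_comm]

lemma finsum_finsum_mem_fiber {M : Type*} [AddCommMonoid M] {s : Set α} (hs : s.Finite)
    (f : α → β) (g : α → M) : ∑ᶠ b, ∑ᶠ a ∈ {a ∈ s | f a = b}, g a = ∑ᶠ a ∈ s, g a := by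
  classical
  lift s to Finset α using hs
  have hfiber : ∀ b, {a ∈ (s : Set α) | f a = b} = ↑(s.filter (f · = b)) := fun b => by
    ext; simp
  simp_rw [hfiber, finsum_mem_coe_finset]
  rw [finsum_eq_sum_of_support_subset _ (s.support_of_fiberwise_sum_subset_image g f),
    Finset.sum_fiberwise_of_maps_to fun a ha => Finset.mem_image_of_mem f ha]

end CountingSeries

lemma finite_setOf_length_eq_forall_le (d n : ℕ) :
    {l : List ℕ | l.length = d ∧ ∀ x ∈ l, x ≤ n}.Finite := by
  refine ((List.finite_length_eq (Fin (n + 1)) d).image (List.map Fin.val)).subset ?_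
  rintro l ⟨hlen, hle⟩
  exact ⟨l.pmap (fun x hx => ⟨x, Nat.lt_succ_of_le hx⟩) hle, by simp [hlen], by simp [map_pmap]⟩

set_option linter.deprecated false in
lemma ebp_singleton {a : ℕ} : EBP [a] ↔ 0 < a ∧ Even a := by
  simp only [EBP, List.Chain', isChain_singleton, getLastD_cons, getLastD_nil, mem_singleton,
    forall_eq, ne_eq, reduceCtorEq, not_false_eq_true, true_and, and_true]

set_option linter.deprecated false in
lemma ebp_cons_cons {a b : ℕ} {l : List ℕ} :
    EBP (a :: b :: l) ↔ b < a ∧ ¬(Odd a ∧ Odd b) ∧ EBP (b :: l) := by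
  simp only [EBP, List.Chain', isChain_cons_cons, ne_eq, reduceCtorEq, not_false_eq_true,
    true_and, mem_cons, forall_eq_or_imp, getLastD_cons, gt_iff_lt]
  constructor
  · rintro ⟨⟨-, hpos⟩, ⟨hlt, hc⟩, hlast, hodd, ho⟩
    exact ⟨hlt, hodd, ⟨hpos.1, hpos.2⟩, hc, hlast, ho⟩
  · rintro ⟨hlt, hodd, ⟨hb, hpos⟩, hc, hlast, ho⟩
    exact ⟨⟨by omega, hb, hpos⟩, ⟨hlt, hc⟩, hlast, hodd, ho⟩

set_option linter.deprecated false in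
lemma irrEBP_singleton {a : ℕ} : IrrEBP [a] ↔ a = 2 := by
  simp only [IrrEBP, ebp_singleton, getLastD_cons, getLastD_nil, List.Chain', isChain_singleton,
    and_true]
  constructor
  · exact fun h => h.2
  · rintro rfl; exact ⟨⟨two_pos, even_two⟩, rfl⟩

set_option linter.deprecated false in
lemma irrEBP_cons_cons {a b : ℕ} {l : List ℕ} :
    IrrEBP (a :: b :: l) ↔ b < a ∧ a ≤ b + 2 ∧ ¬(Odd a ∧ Odd b) ∧ IrrEBP (b :: l) := by
  simp only [IrrEBP, ebp_cons_cons, List.Chain', isChain_cons_cons, getLastD_cons]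
  tauto

def irrHead : ℕ → List ℕ → ℕ
  | _, [] => 2
  | a, b :: l => irrHead b l + if a % 2 = b % 2 then 2 else 1

def irrPart : List ℕ → List ℕ
  | [] => []
  | a :: l => irrHead a l :: irrPart l

def evenPart : List ℕ → List ℕ
  | [] => []
  | a :: l => (a - irrHead a l) :: evenPart l

@[simp] lemma length_irrPart (L : List ℕ) : (irrPart L).length = L.length := by
  induction L <;> simp [irrPart, *]

@[simp] lemma length_evenPart (L : List ℕ) : (evenPart L).length = L.length := by
  induction L <;> simp [evenPart, *]

lemma irrHead_le_and_even : ∀ {a : ℕ} {l : List ℕ}, EBP (a :: l) →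
    irrHead a l ≤ a ∧ Even (a - irrHead a l)
  | a, [], h => by
    obtain ⟨hpos, hev⟩ := ebp_singleton.1 h
    rw [Nat.even_iff] at hev
    rw [irrHead, Nat.even_iff]
    omega
  | a, b :: l, h => by
    obtain ⟨hlt, hodd, h⟩ := ebp_cons_cons.1 h
    obtain ⟨hle, hev⟩ := irrHead_le_and_even h
    rw [Nat.even_iff] at hev ⊢
    rw [Nat.odd_iff, Nat.odd_iff] at hodd
    rw [irrHead]
    split_ifs <;> omega

lemma irrEBP_irrPart : ∀ {L : List ℕ}, EBP L → IrrEBP (irrPart L)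
  | [], h => (h.1 rfl).elim
  | [_], _ => irrEBP_singleton.2 rfl
  | a :: b :: l, h => by
    obtain ⟨hlt, hodd, h⟩ := ebp_cons_cons.1 h
    obtain ⟨hle, hev⟩ := irrHead_le_and_even h
    refine irrEBP_cons_cons.2 ⟨?_, ?_, ?_, irrEBP_irrPart h⟩ <;> rw [irrHead]
    · split_ifs <;> omega
    · split_ifs <;> omega
    · rw [Nat.even_iff] at hev
      rw [Nat.odd_iff, Nat.odd_iff] at hodd ⊢
      split_ifs <;> omega

lemma isChain_evenPart : ∀ {L : List ℕ}, EBP L → (evenPart L).IsChain (· ≥ ·)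
  | [], _ => .nil
  | [_], _ => .singleton _
  | a :: b :: l, h => by
    obtain ⟨hlt, -, h⟩ := ebp_cons_cons.1 h
    refine .cons_cons ?_ (isChain_evenPart h)
    obtain ⟨hle, -⟩ := irrHead_le_and_even h
    simp only [irrHead]
    split_ifs <;> omega

lemma even_of_mem_evenPart : ∀ {L : List ℕ}, EBP L → ∀ x ∈ evenPart L, Even x
  | [], _ => by simp [evenPart]
  | [_], h => by simpa [evenPart] using (irrHead_le_and_even h).2
  | a :: b :: l, h => by
    rw [evenPart, forall_mem_cons]
    exact ⟨(irrHead_le_and_even h).2, even_of_mem_evenPart (ebp_cons_cons.1 h).2.2⟩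

lemma zipWith_irrPart_evenPart : ∀ {L : List ℕ}, EBP L →
    zipWith (· + ·) (irrPart L) (evenPart L) = L
  | [], _ => rfl
  | [_], h => by
    rw [irrPart, evenPart, zipWith_cons_cons, Nat.add_sub_cancel' (irrHead_le_and_even h).1]
    rfl
  | a :: b :: l, h => by
    rw [irrPart, evenPart, zipWith_cons_cons, zipWith_irrPart_evenPart (ebp_cons_cons.1 h).2.2,
      Nat.add_sub_cancel' (irrHead_le_and_even h).1]

lemma irrHead_zipWith_add : ∀ {a μ : ℕ} {I m : List ℕ}, IrrEBP (a :: I) → Even μ →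
    (∀ x ∈ m, Even x) → I.length = m.length → irrHead (a + μ) (zipWith (· + ·) I m) = a
  | _, _, [], _, h, _, _, _ => (irrEBP_singleton.1 h).symm
  | _, _, _ :: _, [], _, _, _, hlen => by simp at hlen
  | a, μ, b :: I, ν :: m, h, hμ, hm, hlen => by
    obtain ⟨hlt, hle, -, h⟩ := irrEBP_cons_cons.1 h
    obtain ⟨hν, hm⟩ := forall_mem_cons.1 hm
    rw [zipWith_cons_cons, irrHead, irrHead_zipWith_add h hν hm (by simpa using hlen)]
    rw [Nat.even_iff] at hμ hν
    split_ifs <;> omega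

lemma irrPart_evenPart_zipWith_add : ∀ {I m : List ℕ}, IrrEBP I → (∀ x ∈ m, Even x) →
    I.length = m.length →
    irrPart (zipWith (· + ·) I m) = I ∧ evenPart (zipWith (· + ·) I m) = m
  | [], _, h, _, _ => (h.1.1 rfl).elim
  | _ :: _, [], _, _, hlen => by simp at hlen
  | [_], [_], h, _, _ => by
    obtain rfl := irrEBP_singleton.1 h
    simp [irrPart, evenPart, irrHead]
  | [_], _ :: _ :: _, _, _, hlen => by simp at hlen
  | _ :: _ :: _, [_], _, _, hlen => by simp at hlen
  | a :: b :: I, μ :: ν :: m, h, hm, hlen => by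
    have hhead := irrHead_zipWith_add h (hm μ mem_cons_self) (forall_mem_cons.1 hm).2
      (by simpa using hlen)
    obtain ⟨hirr, heven⟩ := irrPart_evenPart_zipWith_add (irrEBP_cons_cons.1 h).2.2.2
      (forall_mem_cons.1 hm).2 (by simpa using hlen)
    rw [zipWith_cons_cons, irrPart, evenPart, hhead, hirr, heven, Nat.add_sub_cancel_left]
    exact ⟨rfl, rfl⟩

lemma ebp_zipWith_add : ∀ {I m : List ℕ}, IrrEBP I → m.IsChain (· ≥ ·) → (∀ x ∈ m, Even x) →
    I.length = m.length → EBP (zipWith (· + ·) I m)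
  | [], _, h, _, _, _ => (h.1.1 rfl).elim
  | _ :: _, [], _, _, _, hlen => by simp at hlen
  | [a], [μ], h, _, hm, _ => by
    obtain rfl := irrEBP_singleton.1 h
    exact (ebp_singleton (a := 2 + μ)).2 ⟨by omega, even_two.add (hm μ mem_cons_self)⟩
  | [_], _ :: _ :: _, _, _, _, hlen => by simp at hlen
  | _ :: _ :: _, [_], _, _, _, hlen => by simp at hlen
  | a :: b :: I, μ :: ν :: m, h, hc, hm, hlen => by
    obtain ⟨hlt, -, hodd, h⟩ := irrEBP_cons_cons.1 h
    rw [isChain_cons_cons] at hc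
    have hμ := hm μ mem_cons_self
    have hν := hm ν (mem_cons_of_mem _ mem_cons_self)
    rw [zipWith_cons_cons, zipWith_cons_cons, ebp_cons_cons, ← zipWith_cons_cons]
    refine ⟨by omega, ?_, ebp_zipWith_add h hc.2 (forall_mem_cons.1 hm).2 (by simpa using hlen)⟩
    rw [Nat.even_iff] at hμ hν
    rw [Nat.odd_iff, Nat.odd_iff] at hodd ⊢
    omega

def irreducibles (d : ℕ) : Set (List ℕ) := {I | IrrEBP I ∧ I.length = d}

def billiardPartitions (d : ℕ) : Set (List ℕ) := {L | EBP L ∧ L.length = d}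

/-- Partitions into at most `d` even parts, padded with zeros to length `d`. -/
def evenPartitions (d : ℕ) : Set (List ℕ) :=
  {m | m.length = d ∧ m.IsChain (· ≥ ·) ∧ ∀ x ∈ m, Even x}

theorem bijOn_zipWith_add (d : ℕ) :
    Set.BijOn (fun p : List ℕ × List ℕ => zipWith (· + ·) p.1 p.2)
      (irreducibles d ×ˢ evenPartitions d) (billiardPartitions d) := by
  refine Set.InvOn.bijOn (f' := fun L => (irrPart L, evenPart L)) ⟨?_, ?_⟩ ?_ ?_
  · rintro ⟨I, m⟩ ⟨⟨hI, hIlen⟩, hmlen, -, hm⟩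
    obtain ⟨hirr, heven⟩ := irrPart_evenPart_zipWith_add hI hm (hIlen.trans hmlen.symm)
    exact Prod.ext hirr heven
  · rintro L ⟨hL, -⟩
    exact zipWith_irrPart_evenPart hL
  · rintro ⟨I, m⟩ ⟨⟨hI, hIlen⟩, hmlen, hc, hm⟩
    exact ⟨ebp_zipWith_add hI hc hm (hIlen.trans hmlen.symm), by simp [hIlen, hmlen]⟩
  · rintro L ⟨hL, hlen⟩
    exact ⟨⟨irrEBP_irrPart hL, by simp [hlen]⟩, by simp [hlen], isChain_evenPart hL,
      even_of_mem_evenPart hL⟩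

lemma finite_evenPartitions_sum_eq (d n : ℕ) : {m ∈ evenPartitions d | m.sum = n}.Finite :=
  (finite_setOf_length_eq_forall_le d n).subset fun _ ⟨⟨hlen, _⟩, hsum⟩ =>
    ⟨hlen, fun _ hx => hsum ▸ le_sum_of_mem hx⟩

lemma evenPartitions_zero : evenPartitions 0 = {[]} := by
  ext m
  constructor
  · rintro ⟨hlen, -⟩
    exact length_eq_zero_iff.1 hlen
  · rintro rfl
    exact ⟨rfl, .nil, by simp⟩

lemma append_zero_mem_evenPartitions {d : ℕ} {m : List ℕ} (hm : m ∈ evenPartitions d) :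
    m ++ [0] ∈ evenPartitions (d + 1) := by
  obtain ⟨hlen, hc, hev⟩ := hm
  refine ⟨by simp [hlen], isChain_append.2 ⟨hc, isChain_singleton _, by simp⟩, ?_⟩
  rw [forall_mem_append, forall_mem_singleton]
  exact ⟨hev, .zero⟩

lemma map_add_two_mem_evenPartitions {d : ℕ} {m : List ℕ} (hm : m ∈ evenPartitions d) :
    map (· + 2) m ∈ evenPartitions d := by
  obtain ⟨hlen, hc, hev⟩ := hm
  refine ⟨by simp [hlen], isChain_map_of_isChain _ (fun a b h => by omega) hc, ?_⟩
  simpa using fun a ha => (hev a ha).add even_two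

lemma map_sub_two_mem_evenPartitions {d : ℕ} {m : List ℕ} (hm : m ∈ evenPartitions d)
    (h2 : ∀ x ∈ m, 2 ≤ x) : map (· - 2) m ∈ evenPartitions d := by
  obtain ⟨hlen, hc, hev⟩ := hm
  refine ⟨by simp [hlen], isChain_map_of_isChain _ (fun a b h => by omega) hc, ?_⟩
  simp only [mem_map, forall_exists_index, and_imp, forall_apply_eq_imp_iff₂]
  exact fun x hx => (Nat.even_sub (h2 x hx)).2 (iff_of_true (hev x hx) even_two)

lemma evenPartitions_succ (d : ℕ) :
    evenPartitions (d + 1) =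
      (· ++ [0]) '' evenPartitions d ∪ map (· + 2) '' evenPartitions (d + 1) := by
  refine subset_antisymm ?_ (Set.union_subset ?_ ?_)
  · rintro m' hm'
    obtain ⟨hlen, hc, hev⟩ := hm'
    obtain ⟨m, x, rfl⟩ : ∃ m x, m' = m ++ [x] := by
      rcases eq_nil_or_concat m' with rfl | ⟨m, x, rfl⟩
      · simp at hlen
      · exact ⟨m, x, concat_eq_append⟩
    have hx : ∀ y ∈ m, x ≤ y := fun y hy =>
      (pairwise_append.1 (isChain_iff_pairwise.1 hc)).2.2 y hy x mem_cons_self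
    rcases Nat.eq_zero_or_pos x with rfl | hxpos
    · refine Or.inl ⟨m, ⟨by simpa using hlen, (isChain_append.1 hc).1, ?_⟩, rfl⟩
      exact fun y hy => hev y (mem_append_left _ hy)
    · have h2 : ∀ y ∈ m ++ [x], 2 ≤ y := by
        have : 2 ≤ x := by obtain ⟨k, hk⟩ := hev x (mem_append_right _ mem_cons_self); omega
        rw [forall_mem_append, forall_mem_singleton]
        exact ⟨fun y hy => this.trans (hx y hy), this⟩
      refine Or.inr ⟨_, map_sub_two_mem_evenPartitions ⟨hlen, hc, hev⟩ h2, ?_⟩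
      rw [map_map]
      exact (map_congr_left fun y hy => Nat.sub_add_cancel (h2 y hy)).trans (map_id _)
  · rintro _ ⟨m, hm, rfl⟩
    exact append_zero_mem_evenPartitions hm
  · rintro _ ⟨m, hm, rfl⟩
    exact map_add_two_mem_evenPartitions hm

lemma countingSeries_evenPartitions_succ (d : ℕ) :
    countingSeries (evenPartitions (d + 1)) sum =
      countingSeries (evenPartitions d) sum +
        X ^ (2 * (d + 1)) * countingSeries (evenPartitions (d + 1)) sum := by
  have hdisj :
      Disjoint ((· ++ [0]) '' evenPartitions d) (map (· + 2) '' evenPartitions (d + 1)) := by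
    refine Set.disjoint_left.2 ?_
    rintro _ ⟨m, -, rfl⟩ ⟨m', -, hm'⟩
    have : 0 ∈ map (· + 2) m' := hm' ▸ mem_append_right _ mem_cons_self
    simp at this
  have hfin : ∀ s ⊆ evenPartitions (d + 1), ∀ n, {m ∈ s | m.sum = n}.Finite := fun s hs n =>
    (finite_evenPartitions_sum_eq (d + 1) n).subset fun m hm => ⟨hs hm.1, hm.2⟩
  have hleft : (· ++ [0]) '' evenPartitions d ⊆ evenPartitions (d + 1) := by
    rw [evenPartitions_succ d]
    exact Set.subset_union_left
  have hright : map (· + 2) '' evenPartitions (d + 1) ⊆ evenPartitions (d + 1) := by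
    conv_rhs => rw [evenPartitions_succ d]
    exact Set.subset_union_right
  conv_lhs => rw [evenPartitions_succ]
  rw [countingSeries_union hdisj (hfin _ hleft) (hfin _ hright),
    countingSeries_image (append_left_injective [0]).injOn (v := sum) (fun m _ => by simp),
    countingSeries_image (map_injective_iff.2 (add_left_injective 2)).injOn
      (v := fun m => m.sum + 2 * (d + 1)) (fun m hm => by simp [sum_map_add, hm.1]; ring),
    countingSeries_add_const]

lemma poch_mul_countingSeries_evenPartitions (d : ℕ) :
    poch d * countingSeries (evenPartitions d) sum = 1 := by
  induction d with
  | zero =>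
    rw [poch, Finset.prod_range_zero, one_mul, evenPartitions_zero,
      ← finsum_mem_monomial_eq_countingSeries (Set.finite_singleton _), finsum_mem_singleton,
      sum_nil, monomial_zero_eq_C_apply, map_one]
  | succ d ih =>
    rw [poch, Finset.prod_range_succ, ← poch]
    linear_combination ih + poch d * countingSeries_evenPartitions_succ d

lemma invOfUnit_poch (d : ℕ) :
    invOfUnit (poch d) 1 = countingSeries (evenPartitions d) sum := by
  have hconst : constantCoeff (poch d) = ((1 : ℤˣ) : ℤ) := by
    simp [poch, map_prod]
  exact (left_inv_eq_right_inv (by rw [mul_comm, poch_mul_countingSeries_evenPartitions d])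
    (mul_invOfUnit _ _ hconst)).symm

lemma le_two_mul_length_of_irrEBP : ∀ {I : List ℕ}, IrrEBP I → ∀ x ∈ I, x ≤ 2 * I.length
  | [], h => (h.1.1 rfl).elim
  | [_], h => by simp [irrEBP_singleton.1 h]
  | a :: b :: I, h => by
    obtain ⟨-, hle, -, h⟩ := irrEBP_cons_cons.1 h
    have ih := le_two_mul_length_of_irrEBP h
    have hb := ih b mem_cons_self
    simp only [length_cons] at ih hb ⊢
    exact forall_mem_cons.2 ⟨by omega, fun x hx => (ih x hx).trans (by omega)⟩

lemma finite_irreducibles (d : ℕ) : (irreducibles d).Finite :=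
  (finite_setOf_length_eq_forall_le d (2 * d)).subset fun _ ⟨hI, hlen⟩ =>
    ⟨hlen, hlen ▸ le_two_mul_length_of_irrEBP hI⟩

lemma finsum_coeff_sPSd_mul (d n : ℕ) (f : PowerSeries ℤ) :
    ∑ᶠ N, coeff n (sPSd d N * f) = coeff n (countingSeries (irreducibles d) sum * f) := by
  let φ : PowerSeries ℤ →+ ℤ := (coeff n).toAddMonoidHom.comp (AddMonoidHom.mulRight f)
  have hfin := finite_irreducibles d
  have hfiber : ∀ N, {L | IrrEBP L ∧ L.length = d ∧ L.headD 0 = N} =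
      {L ∈ irreducibles d | L.headD 0 = N} := fun N => by
    ext
    simp [irreducibles, and_assoc]
  calc ∑ᶠ N, coeff n (sPSd d N * f)
      = ∑ᶠ N, ∑ᶠ L ∈ {L ∈ irreducibles d | L.headD 0 = N}, φ (monomial L.sum 1) := by
        congr 1
        ext N
        rw [sPSd, hfiber]
        exact φ.map_finsum_mem _ (hfin.subset (Set.sep_subset _ _))
    _ = ∑ᶠ L ∈ irreducibles d, φ (monomial L.sum 1) := finsum_finsum_mem_fiber hfin _ _
    _ = _ := by
        rw [← φ.map_finsum_mem _ hfin, finsum_mem_monomial_eq_countingSeries hfin]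
        rfl

theorem gf_fixed_d_general (d : ℕ) :
    Set.BijOn (fun p : List ℕ × List ℕ => List.zipWith (· + ·) p.1 p.2)
      {p : List ℕ × List ℕ | IrrEBP p.1 ∧ p.1.length = d ∧ p.2.length = d ∧
        p.2.Chain' (· ≥ ·) ∧ ∀ m ∈ p.2, Even m}
      {L : List ℕ | EBP L ∧ L.length = d} ∧
    (∀ p : List ℕ × List ℕ,
      (IrrEBP p.1 ∧ p.1.length = d ∧ p.2.length = d ∧
        p.2.Chain' (· ≥ ·) ∧ ∀ m ∈ p.2, Even m) →
      (List.zipWith (· + ·) p.1 p.2).sum = p.1.sum + p.2.sum) ∧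
    (∀ n : ℕ,
      ({L : List ℕ | EBP L ∧ L.length = d ∧ L.sum = n}.ncard : ℤ) =
        ∑ᶠ N : ℕ, PowerSeries.coeff n
          (sPSd d N * PowerSeries.invOfUnit (poch d) 1)) := by
  have hbij := bijOn_zipWith_add d
  have hsum : ∀ p ∈ irreducibles d ×ˢ evenPartitions d,
      (zipWith (· + ·) p.1 p.2).sum = p.1.sum + p.2.sum := fun p ⟨⟨_, h1⟩, h2, _⟩ =>
    (sum_add_sum_eq_sum_zipWith_of_length_eq _ _ (h1.trans h2.symm)).symm
  refine ⟨?_, fun p hp => hsum p ⟨⟨hp.1, hp.2.1⟩, hp.2.2⟩, fun n => ?_⟩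
  · convert hbij using 1
    · exact Set.ext fun _ => and_assoc.symm
    · rfl
  · rw [finsum_coeff_sPSd_mul, invOfUnit_poch, ← countingSeries_prod
      (fun _ => (finite_irreducibles d).subset (Set.sep_subset _ _))
      (finite_evenPartitions_sum_eq d), ← countingSeries_image hbij.injOn hsum, hbij.image_eq,
      coeff_countingSeries]
    congr 2
    ext L
    simp [billiardPartitions, and_assoc]

/-- For each `d ≥ 1`: componentwise addition is a sum-preserving bijection
from pairs (irreducible Euclidean billiard partition with `d` parts, weakly
decreasing list of `d` even natural numbers) onto Euclidean billiard
partitions with `d` parts; consequently the generating function of Euclidean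
billiard partitions with `d` parts equals `(Σ_N s(d,N))/(q²;q²)_d`,
stated coefficientwise in `q`. -/
theorem gf_fixed_d (d : ℕ) (hd : 1 ≤ d) :
    Set.BijOn (fun p : List ℕ × List ℕ => List.zipWith (· + ·) p.1 p.2)
      {p : List ℕ × List ℕ | IrrEBP p.1 ∧ p.1.length = d ∧ p.2.length = d ∧
        p.2.Chain' (· ≥ ·) ∧ ∀ m ∈ p.2, Even m}
      {L : List ℕ | EBP L ∧ L.length = d} ∧
    (∀ p : List ℕ × List ℕ,
      (IrrEBP p.1 ∧ p.1.length = d ∧ p.2.length = d ∧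
        p.2.Chain' (· ≥ ·) ∧ ∀ m ∈ p.2, Even m) →
      (List.zipWith (· + ·) p.1 p.2).sum = p.1.sum + p.2.sum) ∧
    (∀ n : ℕ,
      ({L : List ℕ | EBP L ∧ L.length = d ∧ L.sum = n}.ncard : ℤ) =
        ∑ᶠ N : ℕ, PowerSeries.coeff n
          (sPSd d N * PowerSeries.invOfUnit (poch d) 1)) :=
  gf_fixed_d_general d
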